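/- Let N ≥ 1, let p be a prime with 2N < p, and let m be a natural number with 1 ≤ m. Let T and T' be subsets of the integer interval [1, 2N] with |T| = |T'| = m. If for every i with 1 ≤ i ≤ m one has Σ_{z ∈ T} z^i ≡ Σ_{z ∈ T'} z^i (mod p), then T = T'. (That is, a subset of [1,2N] of known size m is uniquely determined by its first m power sums modulo a prime p > 2N.) -/

import Mathlib

/-!
Reduce modulo `p`: since `p > 2N`, casting to `ZMod p` is injective on `[1, 2N]`, so it suffices
to recover the image of `T` in the field `ZMod p` from its first `m` power sums. As `k ≠ 0` in
`ZMod p` for `1 ≤ k ≤ m`, Newton's identities determine the elementary symmetric functions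
`e₁, …, eₘ` recursively from the power sums, and these are the coefficients of
`∏_{t ∈ T} (X - t)`, whose roots are `T`.
-/

open Polynomial Finset

theorem Multiset.eq_of_esymm_eq {R : Type*} [CommRing R] [IsDomain R] {s t : Multiset R}
    (hcard : card s = card t) (hesymm : ∀ k ≤ card s, s.esymm k = t.esymm k) : s = t := by
  have hprod : (s.map fun a => X - C a).prod = (t.map fun a => X - C a).prod := by
    rw [prod_X_sub_X_eq_sum_esymm, prod_X_sub_X_eq_sum_esymm, ← hcard]
    refine Finset.sum_congr rfl fun j hj => ?_
    rw [hesymm j (Nat.lt_succ_iff.mp (Finset.mem_range.mp hj))]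
  simpa only [roots_multiset_prod_X_sub_C] using congrArg roots hprod

namespace Finset

variable {R : Type*}

/-- **Newton's identities** for the elements of a finset. -/
theorem mul_esymm_val_eq_sum [CommRing R] (S : Finset R) (k : ℕ) :
    k * S.val.esymm k = (-1) ^ (k + 1) *
      ∑ a ∈ antidiagonal k with a.1 < k, (-1) ^ a.1 * S.val.esymm a.1 * ∑ z ∈ S, z ^ a.2 := by
  have h := congrArg (MvPolynomial.aeval ((↑) : S → R)) (MvPolynomial.mul_esymm_eq_sum S R k)
  have hpsum : ∀ n, MvPolynomial.aeval ((↑) : S → R) (MvPolynomial.psum S R n) =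
      ∑ z ∈ S, z ^ n := fun n => by
    simp only [MvPolynomial.psum, map_sum, map_pow, MvPolynomial.aeval_X]
    exact sum_attach S (· ^ n)
  have hval : (univ : Finset S).val.map ((↑) : S → R) = S.val := Multiset.attach_map_val S.val
  simpa only [map_mul, map_natCast, map_pow, map_neg, map_one, map_sum, hpsum,
    MvPolynomial.aeval_esymm_eq_multiset_esymm, hval] using h

theorem esymm_val_eq_of_sum_pow_eq [CommRing R] [IsDomain R] {S S' : Finset R} {m : ℕ}
    (hchar : ∀ k, 0 < k → k ≤ m → (k : R) ≠ 0)
    (hsums : ∀ i, 1 ≤ i → i ≤ m → ∑ z ∈ S, z ^ i = ∑ z ∈ S', z ^ i) :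
    ∀ k ≤ m, S.val.esymm k = S'.val.esymm k := by
  intro k
  induction k using Nat.strong_induction_on with
  | _ k ih =>
    intro hkm
    rcases Nat.eq_zero_or_pos k with rfl | hk
    · simp only [Multiset.esymm, Multiset.powersetCard_zero_left, Multiset.map_singleton,
        Multiset.prod_zero, Multiset.sum_singleton]
    refine mul_left_cancel₀ (hchar k hk hkm) ?_
    rw [mul_esymm_val_eq_sum, mul_esymm_val_eq_sum]
    congr 1
    refine sum_congr rfl fun a ha => ?_
    rw [mem_filter, HasAntidiagonal.mem_antidiagonal] at ha
    rw [ih a.1 ha.2 (by omega), hsums a.2 (by omega) (by omega)]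

theorem eq_of_sum_pow_eq [CommRing R] [IsDomain R] {S S' : Finset R} {m : ℕ}
    (hS : S.card = m) (hS' : S'.card = m) (hchar : ∀ k, 0 < k → k ≤ m → (k : R) ≠ 0)
    (hsums : ∀ i, 1 ≤ i → i ≤ m → ∑ z ∈ S, z ^ i = ∑ z ∈ S', z ^ i) : S = S' :=
  val_inj.mp <| Multiset.eq_of_esymm_eq (by simp only [card_val, hS, hS']) fun k hk =>
    esymm_val_eq_of_sum_pow_eq hchar hsums k (by rwa [card_val, hS] at hk)

theorem eq_of_sum_pow_modEq {p m : ℕ} [Fact p.Prime] {T T' : Finset ℕ}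
    (hT : T ⊆ range p) (hT' : T' ⊆ range p) (hcardT : T.card = m) (hcardT' : T'.card = m)
    (hmp : m < p) (hsums : ∀ i, 1 ≤ i → i ≤ m → ∑ z ∈ T, z ^ i ≡ ∑ z ∈ T', z ^ i [MOD p]) :
    T = T' := by
  have hinj : Set.InjOn ((↑) : ℕ → ZMod p) (range p) := by
    simpa only [coe_range] using CharP.natCast_injOn_Iio (ZMod p) p
  have hcast_sum : ∀ {S : Finset ℕ}, S ⊆ range p → ∀ i,
      ∑ z ∈ S.image ((↑) : ℕ → ZMod p), z ^ i = ((∑ z ∈ S, z ^ i : ℕ) : ZMod p) :=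
    fun hS i => by rw [sum_image (hinj.mono hS), Nat.cast_sum]; simp only [Nat.cast_pow]
  refine image_injOn_powerset_of_injOn hinj (mem_powerset.mpr hT) (mem_powerset.mpr hT') ?_
  refine eq_of_sum_pow_eq (m := m) ?_ ?_ ?_ fun i hi him => ?_
  · rw [card_image_of_injOn (hinj.mono hT), hcardT]
  · rw [card_image_of_injOn (hinj.mono hT'), hcardT']
  · intro k hk hkm hk0
    exact absurd (Nat.le_of_dvd hk ((ZMod.natCast_eq_zero_iff k p).mp hk0)) (by omega)
  · rw [hcast_sum hT, hcast_sum hT', ZMod.natCast_eq_natCast_iff]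
    exact hsums i hi him

end Finset

theorem eq_of_power_sums_modEq_general
    (N p m : ℕ) (hp : p.Prime) (hpN : 2 * N < p)
    (T T' : Finset ℕ)
    (hTsub : T ⊆ Finset.Icc 1 (2 * N)) (hT'sub : T' ⊆ Finset.Icc 1 (2 * N))
    (hT : T.card = m) (hT' : T'.card = m)
    (hsums : ∀ i, 1 ≤ i → i ≤ m →
      (∑ z ∈ T, z ^ i) ≡ (∑ z ∈ T', z ^ i) [MOD p]) :
    T = T' := by
  have : Fact p.Prime := ⟨hp⟩
  have hIcc : Icc 1 (2 * N) ⊆ range p := fun z hz => by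
    rw [mem_Icc] at hz
    exact mem_range.mpr (by omega)
  have hmp : m < p := by
    have := card_le_card hTsub
    rw [hT, Nat.card_Icc] at this
    omega
  exact eq_of_sum_pow_modEq (hTsub.trans hIcc) (hT'sub.trans hIcc) hT hT' hmp hsums

/-- A subset of `[1, 2N]` of known size `m` is uniquely determined by its
first `m` power sums modulo a prime `p > 2N`. -/
theorem eq_of_power_sums_modEq
    (N p m : ℕ) (hN : 1 ≤ N) (hp : p.Prime) (hpN : 2 * N < p) (hm : 1 ≤ m)
    (T T' : Finset ℕ)
    (hTsub : T ⊆ Finset.Icc 1 (2 * N)) (hT'sub : T' ⊆ Finset.Icc 1 (2 * N))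
    (hT : T.card = m) (hT' : T'.card = m)
    (hsums : ∀ i, 1 ≤ i → i ≤ m →
      (∑ z ∈ T, z ^ i) ≡ (∑ z ∈ T', z ^ i) [MOD p]) :
    T = T' :=
  eq_of_power_sums_modEq_general N p m hp hpN T T' hTsub hT'sub hT hT' hsums
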